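/- Let C be an essentially small abelian category, 𝒢 a generator of C, and H a subgroup of K0(C) containing H_𝒢. Then the full subcategory f(H) = {A ∈ C : [A] ∈ H} is a dense complete full subcategory of C containing 𝒢. -/
import Mathlib


/-!
Grothendieck groups of essentially small abelian categories.

`K0 C` is the quotient of the free abelian group on the isomorphism classes of objects
of `C` by the subgroup generated by the Euler relations `⟨A⟩ - ⟨B⟩ + ⟨C⟩` coming from
short exact sequences `0 ⟶ A ⟶ B ⟶ C ⟶ 0`; `K0.mk C A` is the class `[A]`.
A full subcategory (identified with its set of objects) is *dense* if every object of `C`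
is a direct summand of an object of the subcategory, and *complete* if whenever two of
the three objects of a short exact sequence lie in it, so does the third.
A *generator* (resp. *cogenerator*) is a full additive subcategory `𝒢` such that every
object `A` fits in a short exact sequence `0 ⟶ A' ⟶ G ⟶ A ⟶ 0`
(resp. `0 ⟶ A ⟶ G ⟶ A' ⟶ 0`) with `G ∈ 𝒢`.
-/

open CategoryTheory CategoryTheory.Limits ZeroObject

universe w v u

namespace AbK0

variable (C : Type u) [Category.{v} C] [Abelian C]

/-- `IsSES f g` says that `0 ⟶ A ⟶ B ⟶ D ⟶ 0` given by `f : A ⟶ B` and `g : B ⟶ D`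
is a short exact sequence. -/
def IsSES {A B D : C} (f : A ⟶ B) (g : B ⟶ D) : Prop :=
  ∃ w : f ≫ g = 0, (ShortComplex.mk f g w).ShortExact

/-- The isomorphism class of an object. -/
def isoCl (A : C) : Quotient (isIsomorphicSetoid C) := Quotient.mk (isIsomorphicSetoid C) A

/-- The subgroup of Euler relations coming from short exact sequences. -/
def K0Rels : AddSubgroup (FreeAbelianGroup (Quotient (isIsomorphicSetoid C))) :=
  AddSubgroup.closure
    { x | ∃ S : ShortComplex C, S.ShortExact ∧
        x = FreeAbelianGroup.of (isoCl C S.X₁) - FreeAbelianGroup.of (isoCl C S.X₂)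
          + FreeAbelianGroup.of (isoCl C S.X₃) }

/-- The Grothendieck group of the abelian category `C`. -/
def K0 : Type u := FreeAbelianGroup (Quotient (isIsomorphicSetoid C)) ⧸ K0Rels C

noncomputable instance : AddCommGroup (K0 C) :=
  QuotientAddGroup.Quotient.addCommGroup _

/-- The class `[A]` of an object `A` in the Grothendieck group. -/
def K0.mk (A : C) : K0 C := QuotientAddGroup.mk (FreeAbelianGroup.of (isoCl C A))

/-- A full subcategory is dense if every object of `C` is a direct summand of an object
of the subcategory. -/
noncomputable def DenseSub (S : Set C) : Prop :=
  ∀ A : C, ∃ X ∈ S, ∃ A' : C, Nonempty (X ≅ A ⊞ A')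

/-- A full subcategory is complete if, in any short exact sequence, whenever two of the
three objects belong to the subcategory, so does the third. -/
def CompleteSub (S : Set C) : Prop :=
  ∀ ⦃A B D : C⦄ (f : A ⟶ B) (g : B ⟶ D), IsSES C f g →
    ((A ∈ S → B ∈ S → D ∈ S) ∧ (A ∈ S → D ∈ S → B ∈ S) ∧ (B ∈ S → D ∈ S → A ∈ S))

/-- A full additive subcategory: it contains a zero object and is closed under
binary direct sums. -/
noncomputable def AdditiveSub (G : Set C) : Prop :=
  (0 : C) ∈ G ∧ ∀ A B : C, A ∈ G → B ∈ G → (A ⊞ B) ∈ G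

/-- `𝒢` is a generator of `C`: a full additive subcategory such that every object `A`
admits a short exact sequence `0 ⟶ A' ⟶ G ⟶ A ⟶ 0` with `G ∈ 𝒢`. -/
noncomputable def IsGenerator (G : Set C) : Prop :=
  AdditiveSub C G ∧
    ∀ A : C, ∃ (A' Gb : C) (f : A' ⟶ Gb) (g : Gb ⟶ A), Gb ∈ G ∧ IsSES C f g

/-- `𝒢` is a cogenerator of `C`: a full additive subcategory such that every object `A`
admits a short exact sequence `0 ⟶ A ⟶ G ⟶ A' ⟶ 0` with `G ∈ 𝒢`. -/
noncomputable def IsCogenerator (G : Set C) : Prop :=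
  AdditiveSub C G ∧
    ∀ A : C, ∃ (Gb A' : C) (f : A ⟶ Gb) (g : Gb ⟶ A'), Gb ∈ G ∧ IsSES C f g

end AbK0

open AbK0

/-- For a generator `𝒢` and a subgroup `H ≤ K₀(C)` containing `H_𝒢`, the full
subcategory `f(H) = {A | [A] ∈ H}` is dense, complete and contains `𝒢`. -/
theorem preimage_subgroup_dense_complete_abelian
    (C : Type u) [Category.{v} C] [Abelian C] [EssentiallySmall.{w} C]
    (G : Set C) (hG : IsGenerator C G)
    (H : AddSubgroup (K0 C)) (hH : AddSubgroup.closure (K0.mk C '' G) ≤ H) :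
    G ⊆ {A : C | K0.mk C A ∈ H} ∧
    DenseSub C {A : C | K0.mk C A ∈ H} ∧ CompleteSub C {A : C | K0.mk C A ∈ H} := by
  have rel : ∀ {A B D : C} (f : A ⟶ B) (g : B ⟶ D), IsSES C f g →
      K0.mk C A - K0.mk C B + K0.mk C D = 0 := by
    intro A B D f g h
    obtain ⟨w, hw⟩ := h
    have hmem : FreeAbelianGroup.of (isoCl C A) - FreeAbelianGroup.of (isoCl C B)
        + FreeAbelianGroup.of (isoCl C D) ∈ K0Rels C :=
      AddSubgroup.subset_closure ⟨ShortComplex.mk f g w, hw, rfl⟩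
    exact (QuotientAddGroup.eq_zero_iff _).mpr hmem
  have hsub : G ⊆ {A : C | K0.mk C A ∈ H} := fun A hA =>
    hH (AddSubgroup.subset_closure ⟨A, hA, rfl⟩)
  refine ⟨hsub, ?_, ?_⟩
  · -- dense
    intro A
    obtain ⟨A', Gb, f, g, hGb, hses⟩ := hG.2 A
    refine ⟨A ⊞ A', ?_, A', ⟨Iso.refl _⟩⟩
    have rel1 := rel f g hses
    have rel2 : K0.mk C A - K0.mk C (A ⊞ A') + K0.mk C A' = 0 :=
      rel (biprod.inl : A ⟶ A ⊞ A') (biprod.snd : A ⊞ A' ⟶ A')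
        ⟨by simp, (ShortComplex.Splitting.ofHasBinaryBiproduct A A').shortExact⟩
    have : K0.mk C (A ⊞ A') = K0.mk C Gb := by
      apply eq_of_sub_eq_zero
      rw [show K0.mk C (A ⊞ A') - K0.mk C Gb
          = (K0.mk C A' - K0.mk C Gb + K0.mk C A) - (K0.mk C A - K0.mk C (A ⊞ A') + K0.mk C A')
          from by abel, rel1, rel2, sub_zero]
    show K0.mk C (A ⊞ A') ∈ H
    rw [this]
    exact hsub hGb
  · -- complete
    intro A B D f g h
    have r := rel f g h
    refine ⟨fun hA hB => ?_, fun hA hD => ?_, fun hB hD => ?_⟩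
    · have : K0.mk C D = K0.mk C B - K0.mk C A := eq_of_sub_eq_zero (by rw [← r]; abel)
      show K0.mk C D ∈ H
      rw [this]; exact H.sub_mem hB hA
    · have : K0.mk C B = K0.mk C A + K0.mk C D := eq_of_sub_eq_zero (by
        rw [show K0.mk C B - (K0.mk C A + K0.mk C D)
          = -(K0.mk C A - K0.mk C B + K0.mk C D) from by abel, r, neg_zero])
      show K0.mk C B ∈ H
      rw [this]; exact H.add_mem hA hD
    · have : K0.mk C A = K0.mk C B - K0.mk C D := eq_of_sub_eq_zero (by rw [← r]; abel)
      show K0.mk C A ∈ H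
      rw [this]; exact H.sub_mem hB hD
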